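/- Let m be an integer with 3 ≤ m ≤ 6 and let C_m be the m×m real symmetric matrix with (i,j)-entry equal to −1 if i = j, equal to 1 if j ≡ i+1 or j ≡ i−1 (mod m), and 0 otherwise. Then C_m has exactly one positive eigenvalue, counted with multiplicity. -/

import Mathlib

/-!
In an orthonormal eigenbasis the quadratic form of a real symmetric matrix is `∑ λᵢ cᵢ²`.
Hence it has a positive eigenvalue as soon as its form is positive somewhere, and it has at most
one as soon as its form is nonpositive on a hyperplane `w ⬝ᵥ x = 0`: two positive eigenvalues
would make the form positive on a plane, which meets every hyperplane nontrivially.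

For `C_m` the form is `m > 0` at the all-ones vector, and it is nonpositive on the sum-zero
hyperplane because the remaining eigenvalues of the circulant `C_m` are `2 cos (2πk/m) - 1`,
`0 < k < m`, all `≤ 0` exactly when `m ≤ 6`.
-/

open Matrix

namespace Matrix.IsHermitian

variable {n : Type*} [Fintype n] [DecidableEq n] {A : Matrix n n ℝ} (hA : A.IsHermitian)

lemma dotProduct_mulVec_eigenvectorUnitary_mulVec (c : n → ℝ) :
    (hA.eigenvectorUnitary : Matrix n n ℝ) *ᵥ c ⬝ᵥ
        A *ᵥ ((hA.eigenvectorUnitary : Matrix n n ℝ) *ᵥ c) =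
      ∑ i, hA.eigenvalues i * c i ^ 2 := by
  set U : Matrix n n ℝ := (hA.eigenvectorUnitary : Matrix n n ℝ)
  have hdiag : Uᵀ * A * U = diagonal hA.eigenvalues := by
    simpa [Unitary.conjStarAlgAut_apply, star_eq_conjTranspose] using
      hA.conjStarAlgAut_star_eigenvectorUnitary
  rw [mulVec_mulVec, ← vecMul_transpose, dotProduct_mulVec, vecMul_vecMul, ← Matrix.mul_assoc,
    hdiag]
  simp only [dotProduct, vecMul_diagonal]
  exact Finset.sum_congr rfl fun i _ ↦ by ring

lemma exists_eigenvalues_pos {v : n → ℝ} (hv : 0 < v ⬝ᵥ A *ᵥ v) :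
    ∃ i, 0 < hA.eigenvalues i := by
  set U : Matrix n n ℝ := (hA.eigenvectorUnitary : Matrix n n ℝ)
  have hv_eq : U *ᵥ (star U *ᵥ v) = v := by
    rw [mulVec_mulVec, Unitary.mul_star_self_of_mem hA.eigenvectorUnitary.2, one_mulVec]
  by_contra! h
  rw [← hv_eq, hA.dotProduct_mulVec_eigenvectorUnitary_mulVec] at hv
  exact hv.not_ge <| Finset.sum_nonpos fun i _ ↦
    mul_nonpos_of_nonpos_of_nonneg (h i) (sq_nonneg _)

lemma card_filter_eigenvalues_pos_le_one (w : n → ℝ)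
    (hw : ∀ x, w ⬝ᵥ x = 0 → x ⬝ᵥ A *ᵥ x ≤ 0) :
    (Finset.univ.filter fun i ↦ 0 < hA.eigenvalues i).card ≤ 1 := by
  set U : Matrix n n ℝ := (hA.eigenvectorUnitary : Matrix n n ℝ)
  refine Finset.card_le_one.mpr fun i hi j hj ↦ ?_
  simp only [Finset.mem_filter, Finset.mem_univ, true_and] at hi hj
  by_contra hij
  -- a nonzero `(a, b)` with `U *ᵥ (a eᵢ + b eⱼ)` on the hyperplane
  obtain ⟨a, b, hab, habw⟩ :
      ∃ a b : ℝ, (a ≠ 0 ∨ b ≠ 0) ∧ a * (w ᵥ* U) i + b * (w ᵥ* U) j = 0 := by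
    by_cases hwi : (w ᵥ* U) i = 0
    · exact ⟨1, 0, by simp, by simp [hwi]⟩
    · exact ⟨(w ᵥ* U) j, -(w ᵥ* U) i, Or.inr (neg_ne_zero.mpr hwi), by ring⟩
  set c : n → ℝ := Pi.single i a + Pi.single j b
  have hc : ∀ t, t ≠ i ∧ t ≠ j → c t = 0 := fun t ht ↦ by simp [c, ht.1, ht.2]
  have hci : c i = a := by simp [c, hij]
  have hcj : c j = b := by simp [c, Ne.symm hij]
  have hw_c : w ⬝ᵥ U *ᵥ c = 0 := by
    rw [dotProduct_mulVec, dotProduct,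
      Fintype.sum_eq_add i j hij fun t ht ↦ by rw [hc t ht, mul_zero], hci, hcj, ← habw,
      mul_comm a, mul_comm b]
  have hform_c : 0 < U *ᵥ c ⬝ᵥ A *ᵥ (U *ᵥ c) := by
    rw [hA.dotProduct_mulVec_eigenvectorUnitary_mulVec,
      Fintype.sum_eq_add i j hij fun t ht ↦ by rw [hc t ht]; ring, hci, hcj]
    rcases hab with ha | hb
    · exact add_pos_of_pos_of_nonneg (by positivity) (by positivity)
    · exact add_pos_of_nonneg_of_pos (by positivity) (by positivity)
  exact (hw _ hw_c).not_gt hform_c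

end Matrix.IsHermitian

def cycleMatrix (m : ℕ) : Matrix (Fin m) (Fin m) ℝ :=
  of fun i j ↦
    if i = j then -1 else if (j : ℕ) = (i + 1) % m ∨ (i : ℕ) = (j + 1) % m then 1 else 0

lemma dotProduct_cycleMatrix_mulVec_nonpos {m : ℕ} (hm : m ≤ 6) {x : Fin m → ℝ}
    (hx : ∑ i, x i = 0) : x ⬝ᵥ cycleMatrix m *ᵥ x ≤ 0 := by
  simp only [dotProduct, mulVec, cycleMatrix, of_apply]
  interval_cases m <;> simp +decide [Fin.sum_univ_succ] at hx ⊢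
  · positivity
  · nlinarith [sq_nonneg (x 0 - x 1)]
  · nlinarith [sq_nonneg (x 0 - x 1), sq_nonneg (x 1 - x 2), sq_nonneg (x 0 - x 2)]
  · nlinarith [sq_nonneg (x 0), sq_nonneg (x 1), sq_nonneg (x 2), sq_nonneg (x 3),
      sq_nonneg (x 0 + x 2), sq_nonneg (x 1 + x 3)]
  · nlinarith [sq_nonneg (6 * x 0 - 4 * x 1 + x 2 + x 3 - 4 * x 4),
      sq_nonneg (2 * x 1 - 2 * x 2 + x 3 - x 4), sq_nonneg (x 2 - x 3), sq_nonneg (x 3 - x 4)]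
  · nlinarith [sq_nonneg (7 * x 0 - 5 * x 1 + x 2 + x 3 + x 4 - 5 * x 5),
      sq_nonneg (4 * x 1 - 5 * x 2 + 2 * x 3 + 2 * x 4 - 3 * x 5),
      sq_nonneg (x 2 - 2 * x 3 + 2 * x 4 - x 5)]

lemma one_dotProduct_cycleMatrix_mulVec_one_pos {m : ℕ} (hm : 3 ≤ m) (hm' : m ≤ 6) :
    0 < 1 ⬝ᵥ cycleMatrix m *ᵥ 1 := by
  simp only [dotProduct, mulVec, cycleMatrix, of_apply]
  interval_cases m <;> simp +decide [Fin.sum_univ_succ] <;> norm_num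

/-- For `3 ≤ m ≤ 6`, the cyclic matrix `C_m` with `-1` on the diagonal and `1`
in the positions cyclically adjacent mod `m` has exactly one positive
eigenvalue (with multiplicity). -/
theorem stmt_4 (m : ℕ) (hm : 3 ≤ m) (hm' : m ≤ 6)
    (C : Matrix (Fin m) (Fin m) ℝ)
    (hC : ∀ i j : Fin m,
      C i j =
        if i = j then -1
        else if (j : ℕ) = ((i : ℕ) + 1) % m ∨ (i : ℕ) = ((j : ℕ) + 1) % m then 1
        else 0)
    (hHerm : C.IsHermitian) :
    (Finset.univ.filter fun i => 0 < hHerm.eigenvalues i).card = 1 := by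
  obtain rfl : C = cycleMatrix m := ext hC
  obtain ⟨i, hi⟩ :=
    hHerm.exists_eigenvalues_pos (one_dotProduct_cycleMatrix_mulVec_one_pos hm hm')
  refine le_antisymm (hHerm.card_filter_eigenvalues_pos_le_one 1 fun x hx ↦ ?_)
    (Finset.one_le_card.mpr ⟨i, by simpa using hi⟩)
  exact dotProduct_cycleMatrix_mulVec_nonpos hm' (by simpa [one_dotProduct] using hx)
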